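/- For every integer d ≥ 2 and every x ∈ D^{d-1}, the configuration c(x) = ((R_{d-1}(−x_1/2, …, −x_{d-1}/2, 1/4), 1/4), (R_{d-1}(x/2 + P_{1/4}), 1/4)), obtained from Ψ(x) = ((x/2 + P_{1/4}, 1/4), ((−x_1/2, …, −x_{d-1}/2, 1/4), 1/4)) by swapping the two balls and applying R_{d-1} to both centers, is a well-defined point of SC_d(2,0;o), and π_c(c(x)) = r_d(J⁺(x)), where J⁺(x) = x'/‖x'‖ with x' = (x_1, …, x_{d-1}, x_d/2). -/

import Mathlib

/-!
Write `t = x_d` and `e_d` for the last unit vector. The centers of `c(x)` are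
`x/2 + (1/4 − t/2) e_d` and `−x/2 + (t + 1/4) e_d`; for `‖x‖ = 1` their squared norms are
`5/16 − t²/4` and `5/16 + t/4`, both at most `9/16` because `0 ≤ t ≤ 1`. Their difference
is `x − (3t/2) e_d = r_d(x')`, of squared norm `‖x'‖² = 1 − 3t²/4 ≥ 1/4`. Since `r_d` is a
linear isometry, `π_c(c(x)) = r_d(x') / ‖r_d(x')‖ = r_d(x'/‖x'‖)`.
-/

noncomputable section

/-- The last index of `Fin d` (corresponding to the last coordinate `x_d`). -/
def lastIdx (d : ℕ) (hd : 2 ≤ d) : Fin d := ⟨d - 1, by omega⟩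

/-- The point `P_{1/4} = (0, …, 0, 1/4)` of `ℝ^d`. -/
def Pquarter (d : ℕ) (hd : 2 ≤ d) : EuclideanSpace ℝ (Fin d) :=
  EuclideanSpace.single (lastIdx d hd) 4⁻¹

/-- The reflection `r_d` of `ℝ^d` negating the last coordinate. -/
def reflLast (d : ℕ) (hd : 2 ≤ d) :
    EuclideanSpace ℝ (Fin d) → EuclideanSpace ℝ (Fin d) :=
  fun x => x - EuclideanSpace.single (lastIdx d hd) (2 * x (lastIdx d hd))

/-- The composite `R_{d-1}` of the reflections `r_1, …, r_{d-1}`, i.e. the map negating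
the first `d − 1` coordinates and keeping the last one. -/
def bigR (d : ℕ) (hd : 2 ≤ d) :
    EuclideanSpace ℝ (Fin d) → EuclideanSpace ℝ (Fin d) :=
  fun x => -x + EuclideanSpace.single (lastIdx d hd) (2 * x (lastIdx d hd))

/-- The configuration space `SC_d(2,0;o)` of two nonoverlapping balls in the closed
upper unit semiball of `ℝ^d`. -/
def SC20o (d : ℕ) (hd : 2 ≤ d) :
    Set ((EuclideanSpace ℝ (Fin d) × ℝ) × (EuclideanSpace ℝ (Fin d) × ℝ)) :=
  {c | 0 < c.1.2 ∧ 0 < c.2.2 ∧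
       c.1.1 (lastIdx d hd) ≥ c.1.2 ∧ c.2.1 (lastIdx d hd) ≥ c.2.2 ∧
       ‖c.1.1‖ + c.1.2 ≤ 1 ∧ ‖c.2.1‖ + c.2.2 ≤ 1 ∧
       ‖c.1.1 - c.2.1‖ ≥ c.1.2 + c.2.2}

/-- The closed disc `D^{d-1} = {x ∈ S^{d-1} : x_d ≥ 0}`. -/
def upperHemi (d : ℕ) (hd : 2 ≤ d) : Set (EuclideanSpace ℝ (Fin d)) :=
  {z | ‖z‖ = 1 ∧ z (lastIdx d hd) ≥ 0}

/-- The raw formula of the projection `π_c`, sending `((x,r),(y,s))` to `(x−y)/‖x−y‖`. -/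
def rawPi (d : ℕ) :
    (EuclideanSpace ℝ (Fin d) × ℝ) × (EuclideanSpace ℝ (Fin d) × ℝ) →
      EuclideanSpace ℝ (Fin d) :=
  fun c => ‖c.1.1 - c.2.1‖⁻¹ • (c.1.1 - c.2.1)

/-- The first center of `Ψ(x)`, namely `x/2 + P_{1/4}`. -/
def firstCenter (d : ℕ) (hd : 2 ≤ d) :
    EuclideanSpace ℝ (Fin d) → EuclideanSpace ℝ (Fin d) :=
  fun x => (2 : ℝ)⁻¹ • x + Pquarter d hd

/-- The second center of `Ψ(x)`, namely `(−x_1/2, …, −x_{d-1}/2, 1/4)`, i.e. `−x/2` with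
its last coordinate replaced by `1/4`. -/
def secondCenter (d : ℕ) (hd : 2 ≤ d) :
    EuclideanSpace ℝ (Fin d) → EuclideanSpace ℝ (Fin d) :=
  fun x =>
    -((2 : ℝ)⁻¹ • x) + EuclideanSpace.single (lastIdx d hd) (x (lastIdx d hd) / 2 + 4⁻¹)

/-- The configuration `c(x)`, obtained from
`Ψ(x) = ((firstCenter x, 1/4), (secondCenter x, 1/4))` by swapping the two balls and
applying `R_{d-1}` to both centers. -/
def swappedReflected (d : ℕ) (hd : 2 ≤ d) :
    EuclideanSpace ℝ (Fin d) →
      (EuclideanSpace ℝ (Fin d) × ℝ) × (EuclideanSpace ℝ (Fin d) × ℝ) :=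
  fun x => ((bigR d hd (secondCenter d hd x), 4⁻¹), (bigR d hd (firstCenter d hd x), 4⁻¹))

/-- The vector `x' = (x_1, …, x_{d-1}, x_d/2)`. -/
def halveLast (d : ℕ) (hd : 2 ≤ d) :
    EuclideanSpace ℝ (Fin d) → EuclideanSpace ℝ (Fin d) :=
  fun x => x - EuclideanSpace.single (lastIdx d hd) (x (lastIdx d hd) / 2)

/-- The raw formula of `J⁺`, `x ↦ x'/‖x'‖` with `x' = (x_1, …, x_{d-1}, x_d/2)`. -/
def Jplus (d : ℕ) (hd : 2 ≤ d) :
    EuclideanSpace ℝ (Fin d) → EuclideanSpace ℝ (Fin d) :=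
  fun x => ‖halveLast d hd x‖⁻¹ • halveLast d hd x

lemma EuclideanSpace.norm_smul_add_single_sq {ι : Type*} [Fintype ι] [DecidableEq ι]
    (x : EuclideanSpace ℝ ι) (i : ι) (s c : ℝ) :
    ‖s • x + EuclideanSpace.single i c‖ ^ 2 =
      s ^ 2 * ‖x‖ ^ 2 + 2 * s * c * x i + c ^ 2 := by
  rw [norm_add_sq_real, real_inner_smul_left, EuclideanSpace.inner_single_right, norm_smul,
    PiLp.norm_single, mul_pow, Real.norm_eq_abs, Real.norm_eq_abs, sq_abs, sq_abs]
  simp only [conj_trivial]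
  ring

section SwissCheese

variable {d : ℕ} {hd : 2 ≤ d}

local notation "L" => lastIdx d hd

lemma reflLast_eq_smul_add_single (v : EuclideanSpace ℝ (Fin d)) :
    reflLast d hd v = (1 : ℝ) • v + EuclideanSpace.single L (-(2 * v L)) := by
  simp [reflLast, sub_eq_add_neg, PiLp.single_neg]

lemma halveLast_eq_smul_add_single (v : EuclideanSpace ℝ (Fin d)) :
    halveLast d hd v = (1 : ℝ) • v + EuclideanSpace.single L (-(v L / 2)) := by
  simp [halveLast, sub_eq_add_neg, PiLp.single_neg]

lemma norm_reflLast (v : EuclideanSpace ℝ (Fin d)) : ‖reflLast d hd v‖ = ‖v‖ := by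
  have h : ‖reflLast d hd v‖ ^ 2 = ‖v‖ ^ 2 := by
    rw [reflLast_eq_smul_add_single, EuclideanSpace.norm_smul_add_single_sq]; ring
  exact (sq_eq_sq₀ (norm_nonneg _) (norm_nonneg _)).1 h

lemma reflLast_smul (a : ℝ) (v : EuclideanSpace ℝ (Fin d)) :
    reflLast d hd (a • v) = a • reflLast d hd v := by
  ext j
  by_cases hj : j = L <;> simp [reflLast, hj]; ring

variable (x : EuclideanSpace ℝ (Fin d))

lemma bigR_secondCenter :
    bigR d hd (secondCenter d hd x) =
      (2 : ℝ)⁻¹ • x + EuclideanSpace.single L (4⁻¹ - x L / 2) := by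
  ext j
  by_cases hj : j = L <;> simp [bigR, secondCenter, hj]; ring

lemma bigR_firstCenter :
    bigR d hd (firstCenter d hd x) =
      (-(2 : ℝ)⁻¹) • x + EuclideanSpace.single L (x L + 4⁻¹) := by
  ext j
  by_cases hj : j = L <;> simp [bigR, firstCenter, Pquarter, hj]; ring

lemma bigR_secondCenter_apply_last : bigR d hd (secondCenter d hd x) L = 4⁻¹ := by
  simp [bigR_secondCenter]; ring

lemma bigR_firstCenter_apply_last : bigR d hd (firstCenter d hd x) L = x L / 2 + 4⁻¹ := by
  simp [bigR_firstCenter]; ring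

lemma bigR_secondCenter_sub_bigR_firstCenter :
    bigR d hd (secondCenter d hd x) - bigR d hd (firstCenter d hd x) =
      reflLast d hd (halveLast d hd x) := by
  ext j
  by_cases hj : j = L <;>
    simp [bigR_secondCenter, bigR_firstCenter, reflLast, halveLast, hj] <;> ring

theorem rawPi_swappedReflected :
    rawPi d (swappedReflected d hd x) = reflLast d hd (Jplus d hd x) := by
  simp only [rawPi, swappedReflected, Jplus, bigR_secondCenter_sub_bigR_firstCenter,
    norm_reflLast, reflLast_smul]

variable {x}

lemma norm_bigR_secondCenter_sq (hx : ‖x‖ = 1) :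
    ‖bigR d hd (secondCenter d hd x)‖ ^ 2 = 5 / 16 - x L ^ 2 / 4 := by
  rw [bigR_secondCenter, EuclideanSpace.norm_smul_add_single_sq, hx]; ring

lemma norm_bigR_firstCenter_sq (hx : ‖x‖ = 1) :
    ‖bigR d hd (firstCenter d hd x)‖ ^ 2 = 5 / 16 + x L / 4 := by
  rw [bigR_firstCenter, EuclideanSpace.norm_smul_add_single_sq, hx]; ring

lemma norm_halveLast_sq (hx : ‖x‖ = 1) : ‖halveLast d hd x‖ ^ 2 = 1 - 3 / 4 * x L ^ 2 := by
  rw [halveLast_eq_smul_add_single, EuclideanSpace.norm_smul_add_single_sq, hx]; ring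

lemma swappedReflected_mem_SC20o (hx : x ∈ upperHemi d hd) :
    swappedReflected d hd x ∈ SC20o d hd := by
  obtain ⟨hx_norm, hx_last_nonneg⟩ := hx
  have hx_last_le_one : x L ≤ 1 := by
    simpa [Real.norm_eq_abs, hx_norm] using (le_abs_self _).trans (PiLp.norm_apply_le x L)
  have hnorm_second : ‖bigR d hd (secondCenter d hd x)‖ ≤ 3 / 4 := by
    refine (sq_le_sq₀ (norm_nonneg _) (by norm_num)).1 ?_
    rw [norm_bigR_secondCenter_sq hx_norm]; nlinarith
  have hnorm_first : ‖bigR d hd (firstCenter d hd x)‖ ≤ 3 / 4 := by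
    refine (sq_le_sq₀ (norm_nonneg _) (by norm_num)).1 ?_
    rw [norm_bigR_firstCenter_sq hx_norm]; linarith
  have hsep : 1 / 2 ≤ ‖bigR d hd (secondCenter d hd x) - bigR d hd (firstCenter d hd x)‖ := by
    rw [bigR_secondCenter_sub_bigR_firstCenter, norm_reflLast]
    refine (sq_le_sq₀ (by norm_num) (norm_nonneg _)).1 ?_
    rw [norm_halveLast_sq hx_norm]; nlinarith
  simp only [SC20o, swappedReflected, Set.mem_ofPred_eq, bigR_secondCenter_apply_last,
    bigR_firstCenter_apply_last]
  exact ⟨by norm_num, by norm_num, le_rfl, by linarith, by linarith, by linarith, by linarith⟩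

end SwissCheese

/-- For every integer `d ≥ 2` and every `x ∈ D^{d-1}`, the configuration
`c(x) = ((R_{d-1}(secondCenter x), 1/4), (R_{d-1}(firstCenter x), 1/4))`, obtained from
`Ψ(x)` by swapping the two balls and applying `R_{d-1}` to both centers, is a
well-defined point of `SC_d(2,0;o)`, and `π_c(c(x)) = r_d(J⁺(x))`. -/
theorem swissCheese_swapped_reflected_projects_to_rd_Jplus (d : ℕ) (hd : 2 ≤ d) :
    ∀ x ∈ upperHemi d hd,
      swappedReflected d hd x ∈ SC20o d hd ∧
      rawPi d (swappedReflected d hd x) = reflLast d hd (Jplus d hd x) :=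
  fun x hx => ⟨swappedReflected_mem_SC20o hx, rawPi_swappedReflected x⟩
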